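/- arXiv:1702.08157 — 2 statements merged into one kernel-verified Lean document; each statement's English description precedes it below -/
import Mathlib

section
/- Let a, λ ∈ ℂ with 0 < |λ| ≤ 2|a| and a ≠ 0, and let p > 0, m ≥ 0. Then ∫_ℂ |exp(a z²/λ)|^p · (1+|z|)^{mp} · e^{−(p/2)|z|²} dA(z) = ∞; that is, the function z ↦ exp(a z²/λ) does not belong to the Fock–Sobolev space F^p_{ψ_m}. -/
open MeasureTheory

/-- For a, λ ∈ ℂ with 0 < |λ| ≤ 2|a| and a ≠ 0, p > 0 and m ≥ 0, the function
z ↦ exp(a z²/λ) does not belong to the Fock–Sobolev space F^p_{ψ_m}, i.e.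
∫_ℂ |exp(a z²/λ)|^p (1+|z|)^{mp} e^{−(p/2)|z|²} dA(z) = ∞. -/
theorem stmt7 (a lam : ℂ) (ha : a ≠ 0) (hlam0 : 0 < ‖lam‖)
    (hlam : ‖lam‖ ≤ 2 * ‖a‖)
    (p m : ℝ) (hp : 0 < p) (hm : 0 ≤ m) :
    ¬ Integrable
      (fun z : ℂ =>
        ‖Complex.exp (a * z ^ 2 / lam)‖ ^ p *
          (1 + ‖z‖) ^ (m * p) *
          Real.exp (-(p / 2) * ‖z‖ ^ 2))
      volume := by
  intro hI
  have hlam' : lam ≠ 0 := by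
    intro h; simp [h] at hlam0
  set u : ℂ := a / lam with hu_def
  have hu0 : u ≠ 0 := div_ne_zero ha hlam'
  have hua : 0 < ‖u‖ := norm_pos_iff.mpr hu0
  have humod : (1:ℝ)/2 ≤ ‖u‖ := by
    rw [hu_def, norm_div, le_div_iff₀ hlam0]
    linarith
  set v : ℂ := (starRingEnd ℂ) u / (‖u‖ : ℂ) with hv_def
  have hvabs : ‖v‖ = 1 := by
    rw [hv_def, norm_div, Complex.norm_conj, Complex.norm_of_nonneg hua.le,
      div_self hua.ne']
  have hv0 : v ≠ 0 := by
    intro h; rw [h] at hvabs; simp at hvabs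
  set w : ℂ := Complex.exp (Complex.log v / 2) with hw_def
  have hw2 : w ^ 2 = v := by
    rw [hw_def, ← Complex.exp_nat_mul,
      show ((2:ℕ):ℂ) * (Complex.log v / 2) = Complex.log v by push_cast; ring,
      Complex.exp_log hv0]
  have hwabs : ‖w‖ = 1 := by
    rw [hw_def, Complex.norm_exp]
    have : (Complex.log v / 2).re = Real.log (‖v‖) / 2 := by
      simp [Complex.div_re, Complex.log_re]
    rw [this, hvabs, Real.log_one, zero_div, Real.exp_zero]
  have key : u * w ^ 2 = (‖u‖ : ℂ) := by
    rw [hw2, hv_def, mul_div_assoc', Complex.mul_conj, Complex.normSq_eq_norm_sq,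
      div_eq_iff (by exact_mod_cast hua.ne' : (‖u‖ : ℂ) ≠ 0)]
    push_cast
    ring
  -- the rotation
  set W : Circle := ⟨w, by show w ∈ Metric.sphere (0:ℂ) 1; simp [hwabs]⟩ with hW_def
  have hmp : MeasurePreserving (rotation W) volume volume :=
    (rotation W).measurePreserving
  set f : ℂ → ℝ := fun z : ℂ =>
        ‖Complex.exp (a * z ^ 2 / lam)‖ ^ p *
          (1 + ‖z‖) ^ (m * p) *
          Real.exp (-(p / 2) * ‖z‖ ^ 2) with hf_def
  have hI2 : Integrable (f ∘ (rotation W)) volume :=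
    (hmp.integrable_comp_emb (rotation W).toHomeomorph.measurableEmbedding).2 hI
  set A : Set ℂ := {z | 1 ≤ z.re ∧ |z.im| ≤ 1} with hA_def
  have hAmeas : MeasurableSet A := by
    apply MeasurableSet.inter
    · exact measurableSet_le measurable_const Complex.measurable_re
    · exact measurableSet_le (Complex.measurable_im.abs) measurable_const
  have hbound : ∀ z ∈ A, Real.exp (-p) ≤ (f ∘ (rotation W)) z := by
    rintro z ⟨hx, hy⟩
    set x := z.re
    set y := z.im
    have hy2 : y ^ 2 ≤ 1 := by
      have := abs_le.1 hy
      nlinarith [this.1, this.2]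
    have hx2 : 1 ≤ x ^ 2 := by nlinarith
    have harg : a * ((rotation W) z) ^ 2 / lam = (‖u‖ : ℂ) * z ^ 2 := by
      have : (rotation W) z = w * z := rfl
      rw [this, mul_pow, ← key]
      field_simp [hu_def]
      have hul : u * lam = a := by rw [hu_def]; exact div_mul_cancel₀ a hlam'
      linear_combination (-(w ^ 2 * z ^ 2)) * hul
    have habsz : ‖(rotation W) z‖ = ‖z‖ := by
      have : (rotation W) z = w * z := rfl
      rw [this, norm_mul, hwabs, one_mul]
    have hre : ((‖u‖ : ℂ) * z ^ 2).re = ‖u‖ * (x ^ 2 - y ^ 2) := by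
      simp [Complex.mul_re, pow_two, Complex.mul_im]
      left; rfl
    have habssq : ‖z‖ ^ 2 = x ^ 2 + y ^ 2 := by
      rw [Complex.sq_norm, Complex.normSq_apply]; ring
    simp only [Function.comp_apply, hf_def, harg, habsz, Complex.norm_exp, hre, habssq]
    have h1 : Real.exp (‖u‖ * (x ^ 2 - y ^ 2)) ^ p =
        Real.exp (‖u‖ * (x ^ 2 - y ^ 2) * p) := (Real.exp_mul _ _).symm
    rw [h1]
    have hM : (1:ℝ) ≤ (1 + ‖z‖) ^ (m * p) := by
      apply Real.one_le_rpow
      · have := norm_nonneg z; linarith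
      · exact mul_nonneg hm hp.le
    calc Real.exp (-p)
        ≤ Real.exp (‖u‖ * (x ^ 2 - y ^ 2) * p + -(p / 2) * (x ^ 2 + y ^ 2)) := by
          apply Real.exp_le_exp.2
          nlinarith [mul_le_mul_of_nonneg_right humod (by nlinarith : (0:ℝ) ≤ x ^ 2 - y ^ 2)]
      _ = Real.exp (‖u‖ * (x ^ 2 - y ^ 2) * p) *
            Real.exp (-(p / 2) * (x ^ 2 + y ^ 2)) := Real.exp_add _ _
      _ ≤ Real.exp (‖u‖ * (x ^ 2 - y ^ 2) * p) * (1 + ‖z‖) ^ (m * p) *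
            Real.exp (-(p / 2) * (x ^ 2 + y ^ 2)) := by
          have e1 := Real.exp_pos (‖u‖ * (x ^ 2 - y ^ 2) * p)
          have e2 := Real.exp_pos (-(p / 2) * (x ^ 2 + y ^ 2))
          nlinarith [mul_le_mul_of_nonneg_left hM (mul_nonneg e1.le e2.le)]
  -- constant is integrable on A
  have hconst : IntegrableOn (fun _ : ℂ => Real.exp (-p)) A volume := by
    apply Integrable.mono' (hI2.integrableOn (s := A)) aestronglyMeasurable_const
    filter_upwards [ae_restrict_mem hAmeas] with z hz
    rw [Real.norm_eq_abs, abs_of_pos (Real.exp_pos _)]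
    exact hbound z hz
  have hAfin : volume A < ⊤ := by
    rcases ((integrableOn_const_iff (C := Real.exp (-p)) enorm_ne_top).1 hconst) with h | h
    · exact absurd (enorm_eq_zero.1 h) (Real.exp_pos _).ne'
    · exact h
  -- but A has infinite volume
  have hAvol : volume A = ⊤ := by
    have hAeq : A = Complex.measurableEquivRealProd ⁻¹' (Set.Ici (1:ℝ) ×ˢ Set.Icc (-1:ℝ) 1) := by
      ext z
      simp [hA_def, Complex.measurableEquivRealProd, abs_le, and_assoc]
    rw [hAeq, Complex.volume_preserving_equiv_real_prod.measure_preimage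
      ((measurableSet_Ici.prod measurableSet_Icc).nullMeasurableSet)]
    rw [Measure.volume_eq_prod, Measure.prod_prod, Real.volume_Ici, Real.volume_Icc]
    simp
  rw [hAvol] at hAfin
  exact absurd hAfin (lt_irrefl _)
end

section
/- Let q > 0, m ≥ 0, and let g be an entire function. If sup over w ∈ ℂ of ∫_{D(w,1)} |g'(z)|^q · (1+|z|)^q / (1 + |z| + | |z|² + |z| − m |)^q dA(z) is finite, then g is a polynomial of degree at most 2. -/
open MeasureTheory Metric Real Set intervalIntegral

lemma submean_circle (f : ℂ → ℂ) (hf : Differentiable ℂ f) (c : ℂ) {s : ℝ} (hs : 0 < s) :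
    2 * π * ‖f c‖ ≤ ∫ θ in (0:ℝ)..(2*π), ‖f (circleMap c s θ)‖ := by
  have key := (hf.diffContOnCl (s := ball c s)).circleIntegral_sub_inv_smul
    (w := c) (mem_ball_self hs)
  have h1 : ‖(2 * π * Complex.I : ℂ) • f c‖ = 2 * π * ‖f c‖ := by
    simp [norm_smul, abs_of_pos Real.pi_pos]
  calc 2 * π * ‖f c‖ = ‖∮ z in C(c, s), (z - c)⁻¹ • f z‖ := by rw [key, h1]
    _ ≤ ∫ θ in (0:ℝ)..(2*π), ‖deriv (circleMap c s) θ • ((circleMap c s θ - c)⁻¹ • f (circleMap c s θ))‖ := by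
        rw [circleIntegral]
        exact intervalIntegral.norm_integral_le_integral_norm (by positivity)
    _ = ∫ θ in (0:ℝ)..(2*π), ‖f (circleMap c s θ)‖ := by
        congr 1
        ext θ
        rw [deriv_circleMap, smul_smul, norm_smul]
        have h2 : ‖circleMap 0 s θ‖ = s := by
          rw [norm_circleMap_zero, abs_of_pos hs]
        have h3 : circleMap 0 s θ ≠ 0 := by
          intro h; rw [h] at h2; simp at h2; exact hs.ne h2
        rw [circleMap_sub_center c s θ, mul_right_comm, mul_inv_cancel₀ h3]
        simp

lemma submean_disk (f : ℂ → ℂ) (hf : Differentiable ℂ f) (c : ℂ) {r : ℝ} (hr : 0 < r) :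
    π * r ^ 2 * ‖f c‖ ≤ ∫ z in ball c r, ‖f z‖ := by
  set F : ℝ × ℝ → ℝ := fun p => p.1 * ‖f (c + (p.1 * (Real.cos p.2 + Real.sin p.2 * Complex.I) : ℂ))‖ with hF
  have hFcont : Continuous F := by
    apply Continuous.mul continuous_fst
    apply Continuous.norm
    apply hf.continuous.comp
    continuity
  have hsymm : ∀ p : ℝ × ℝ, Complex.polarCoord.symm p
      = ((p.1 : ℂ) * (Real.cos p.2 + Real.sin p.2 * Complex.I)) := by
    intro p; rw [Complex.polarCoord_symm_apply]
  -- step (a): translation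
  have ha : ∫ z in ball c r, ‖f z‖
      = ∫ z : ℂ, (ball (0:ℂ) r).indicator (fun z => ‖f (c + z)‖) z := by
    rw [← MeasureTheory.integral_indicator measurableSet_ball,
      ← integral_add_left_eq_self (μ := (volume : Measure ℂ))
        (f := (ball c r).indicator fun z => ‖f z‖) c]
    congr 1
    ext z
    by_cases h : z ∈ ball (0:ℂ) r
    · rw [indicator_of_mem h, indicator_of_mem]
      simpa [mem_ball, dist_eq_norm] using (mem_ball_zero_iff.mp h)
    · rw [indicator_of_notMem h, indicator_of_notMem]
      intro hc
      exact h (by simpa [mem_ball, dist_eq_norm] using hc)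
  -- step (b,c): polar coordinates
  have hb : ∫ z : ℂ, (ball (0:ℂ) r).indicator (fun z => ‖f (c + z)‖) z
      = ∫ p in Ioo (0:ℝ) r ×ˢ Ioo (-π) π, F p := by
    rw [← Complex.integral_comp_polarCoord_symm]
    rw [show polarCoord.target = Ioi (0:ℝ) ×ˢ Ioo (-π) π from rfl]
    have heq : EqOn (fun p : ℝ × ℝ => p.1 • (ball (0:ℂ) r).indicator (fun z => ‖f (c + z)‖)
        (Complex.polarCoord.symm p)) ((Ioo (0:ℝ) r ×ˢ Ioo (-π) π).indicator F)
        (Ioi (0:ℝ) ×ˢ Ioo (-π) π) := by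
      rintro ⟨s, θ⟩ ⟨hs, hθ⟩
      simp only [mem_Ioi] at hs
      have habs : ‖Complex.polarCoord.symm (s, θ)‖ = s := by
        rw [Complex.norm_polarCoord_symm]; exact abs_of_pos hs
      have hmem : Complex.polarCoord.symm (s, θ) ∈ ball (0:ℂ) r ↔ s < r := by
        rw [mem_ball_zero_iff, habs]
      by_cases h : s < r
      · have h1 : ((s, θ) : ℝ × ℝ) ∈ Ioo (0:ℝ) r ×ˢ Ioo (-π) π := ⟨⟨hs, h⟩, hθ⟩
        simp only [indicator_of_mem h1, smul_eq_mul, hF]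
        rw [indicator_of_mem (hmem.mpr h), hsymm (s, θ)]
      · have h1 : ((s, θ) : ℝ × ℝ) ∉ Ioo (0:ℝ) r ×ˢ Ioo (-π) π := by
          rintro ⟨⟨_, h2⟩, _⟩; exact h h2
        simp only [indicator_of_notMem h1, indicator_of_notMem (fun hc => h (hmem.mp hc)),
          smul_eq_mul, mul_zero]
    rw [setIntegral_congr_fun (by measurability) heq,
      setIntegral_indicator (by measurability),
      inter_eq_self_of_subset_right (prod_mono (Ioo_subset_Ioi_self) subset_rfl)]
  -- integrability of F on the rectangle
  have hFint : IntegrableOn F (Ioo (0:ℝ) r ×ˢ Ioo (-π) π) :=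
    (hFcont.continuousOn.integrableOn_compact (isCompact_Icc.prod isCompact_Icc)).mono_set
      (prod_mono Ioo_subset_Icc_self Ioo_subset_Icc_self)
  -- step (d): Fubini
  have hd : ∫ p in Ioo (0:ℝ) r ×ˢ Ioo (-π) π, F p
      = ∫ s in Ioo (0:ℝ) r, ∫ θ in Ioo (-π) π, F (s, θ) := by
    rw [Measure.volume_eq_prod] at hFint ⊢
    exact setIntegral_prod F hFint
  -- step (e): inner bound
  have he : ∀ s ∈ Ioo (0:ℝ) r, 2 * π * ‖f c‖ * s ≤ ∫ θ in Ioo (-π) π, F (s, θ) := by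
    rintro s ⟨hs0, _⟩
    have hcirc : ∀ θ : ℝ, F (s, θ) = s * ‖f (circleMap c s θ)‖ := by
      intro θ
      simp only [hF, circleMap, Complex.exp_mul_I]
      norm_num
    calc 2 * π * ‖f c‖ * s = s * (2 * π * ‖f c‖) := by ring
      _ ≤ s * ∫ θ in (0:ℝ)..(2*π), ‖f (circleMap c s θ)‖ :=
          mul_le_mul_of_nonneg_left (submean_circle f hf c hs0) hs0.le
      _ = ∫ θ in Ioo (-π) π, F (s, θ) := by
          have hper : Function.Periodic (fun θ => ‖f (circleMap c s θ)‖) (2*π) :=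
            (periodic_circleMap c s).comp fun z => ‖f z‖
          have := hper.intervalIntegral_add_eq (-π) 0
          simp only [zero_add] at this
          rw [← this, show -π + 2*π = π by ring]
          rw [intervalIntegral.integral_of_le (by linarith [Real.pi_pos]),
            MeasureTheory.integral_Ioc_eq_integral_Ioo]
          rw [← MeasureTheory.integral_const_mul]
          exact setIntegral_congr_fun measurableSet_Ioo fun θ _ => (hcirc θ).symm
  -- step (f): outer bound
  have houter : IntegrableOn (fun s => ∫ θ in Ioo (-π) π, F (s, θ)) (Ioo (0:ℝ) r) := by
    rw [IntegrableOn, Measure.volume_eq_prod, ← Measure.prod_restrict] at hFint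
    exact hFint.integral_prod_left
  have hf1 : π * r ^ 2 * ‖f c‖ = ∫ s in Ioo (0:ℝ) r, 2 * π * ‖f c‖ * s := by
    rw [MeasureTheory.integral_const_mul, ← MeasureTheory.integral_Ioc_eq_integral_Ioo,
      ← intervalIntegral.integral_of_le hr.le, integral_id]
    ring
  rw [ha, hb, hd, hf1]
  have hlin : IntegrableOn (fun s : ℝ => 2 * π * ‖f c‖ * s) (Ioo (0:ℝ) r) :=
    ((continuous_const.mul continuous_id).continuousOn.integrableOn_compact
      isCompact_Icc).mono_set Ioo_subset_Icc_self
  exact setIntegral_mono_on hlin houter measurableSet_Ioo he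

lemma cont_norm_rpow (f : ℂ → ℂ) (hf : Differentiable ℂ f) {t : ℝ} (ht : 0 < t) :
    Continuous fun z => ‖f z‖ ^ t := by
  rw [continuous_iff_continuousAt]
  intro z
  exact (Real.continuousAt_rpow_const _ _ (Or.inr ht.le)).comp hf.continuous.norm.continuousAt

set_option maxHeartbeats 1000000 in
lemma submean_pow (f : ℂ → ℂ) (hf : Differentiable ℂ f) (w : ℂ) {t : ℝ} (ht : 0 < t)
    (ht1 : t ≤ 1) :
    ‖f w‖ ^ t ≤ 2 ^ (2/t + 2) / π * ∫ z in ball w 1, ‖f z‖ ^ t := by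
  set I := ∫ z in ball w 1, ‖f z‖ ^ t with hIdef
  have hI0 : 0 ≤ I := setIntegral_nonneg measurableSet_ball
    (fun z _ => Real.rpow_nonneg (norm_nonneg _) t)
  have hIint : IntegrableOn (fun z => ‖f z‖ ^ t) (ball w 1) :=
    ((cont_norm_rpow f hf ht).continuousOn.integrableOn_compact
      (isCompact_closedBall w 1)).mono_set ball_subset_closedBall
  set ψ : ℂ → ℝ := fun z => (1 - ‖z - w‖) ^ (2/t) * ‖f z‖ with hψ
  have h2t : (0:ℝ) < 2/t := by positivity
  have hψcont : ContinuousOn ψ (closedBall w 1) := by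
    apply ContinuousOn.mul _ hf.continuous.norm.continuousOn
    apply ContinuousOn.rpow_const ((continuousOn_const.sub
      ((continuous_id.sub continuous_const).norm.continuousOn)))
    intro z _; right; exact h2t.le
  obtain ⟨z₀, hz₀m, hz₀max⟩ := (isCompact_closedBall w 1).exists_isMaxOn
    ⟨w, mem_closedBall_self zero_le_one⟩ hψcont
  have hmax : ∀ z ∈ closedBall w 1, ψ z ≤ ψ z₀ := hz₀max
  have hψw : ψ w = ‖f w‖ := by simp [hψ, Real.one_rpow]
  have hfw : ‖f w‖ ≤ ψ z₀ := by rw [← hψw]; exact hmax w (mem_closedBall_self zero_le_one)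
  by_cases hψ0 : ψ z₀ ≤ 0
  · have : ‖f w‖ = 0 := le_antisymm (hfw.trans hψ0) (norm_nonneg _)
    rw [this, Real.zero_rpow ht.ne']
    positivity
  push_neg at hψ0
  have hψ0' : 0 < (1 - ‖z₀ - w‖) ^ (2/t) * ‖f z₀‖ := hψ0
  have hz₀w : ‖z₀ - w‖ ≤ 1 := by simpa [dist_eq_norm] using hz₀m
  set d := 1 - ‖z₀ - w‖ with hd
  have hd0 : 0 ≤ d := by rw [hd]; linarith
  have hdpos : 0 < d := by
    rcases hd0.lt_or_eq with h | h
    · exact h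
    · exfalso
      rw [← h, Real.zero_rpow h2t.ne', zero_mul] at hψ0'
      exact lt_irrefl 0 hψ0'
  set M := ‖f z₀‖ with hM
  have hMpos : 0 < M := by
    by_contra h
    push_neg at h
    have : M = 0 := le_antisymm h (norm_nonneg _)
    rw [this, mul_zero] at hψ0'
    exact lt_irrefl 0 hψ0'
  set r := d/2 with hr
  have hrpos : 0 < r := by positivity
  have hsub : ball z₀ r ⊆ ball w 1 := by
    intro z hz
    rw [mem_ball, dist_eq_norm] at hz ⊢
    calc ‖z - w‖ ≤ ‖z - z₀‖ + ‖z₀ - w‖ := by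
          simpa using norm_add_le (z - z₀) (z₀ - w)
      _ < r + (1 - d) := by rw [hd]; linarith
      _ ≤ 1 := by rw [hr]; linarith
  -- sup bound on the small ball
  have hKbd : ∀ z ∈ ball z₀ r, ‖f z‖ ≤ 2 ^ (2/t) * M := by
    intro z hz
    rw [mem_ball, dist_eq_norm] at hz
    have h1 : ‖z - w‖ ≤ ‖z - z₀‖ + ‖z₀ - w‖ := by
      simpa using norm_add_le (z - z₀) (z₀ - w)
    have h2 : 1 - ‖z - w‖ ≥ r := by rw [hr]; rw [hd] at *; linarith
    have hzcb : z ∈ closedBall w 1 := by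
      rw [mem_closedBall, dist_eq_norm]; linarith [hrpos]
    have h3 : ψ z ≤ ψ z₀ := hmax z hzcb
    rw [hψ] at h3
    have h4 : r ^ (2/t) * ‖f z‖ ≤ d ^ (2/t) * M := by
      refine le_trans ?_ h3
      apply mul_le_mul_of_nonneg_right _ (norm_nonneg _)
      exact Real.rpow_le_rpow hrpos.le h2 h2t.le
    have h5 : (0:ℝ) < r ^ (2/t) := Real.rpow_pos_of_pos hrpos _
    have h6 : d ^ (2/t) / r ^ (2/t) = 2 ^ (2/t) := by
      rw [← Real.div_rpow hd0 hrpos.le]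
      congr 1
      rw [hr]
      field_simp
    calc ‖f z‖ = r ^ (2/t) * ‖f z‖ / r ^ (2/t) := by field_simp
      _ ≤ d ^ (2/t) * M / r ^ (2/t) := by gcongr
      _ = 2 ^ (2/t) * M := by rw [← h6]; ring
  -- submean + splitting
  set K := 2 ^ (2/t) * M with hK
  have hKpos : 0 < K := by positivity
  have step1 : π * r^2 * M ≤ K ^ (1-t) * I := by
    refine (submean_disk f hf z₀ hrpos).trans ?_
    have hb : ∀ z ∈ ball z₀ r, ‖f z‖ ≤ K ^ (1-t) * ‖f z‖ ^ t := by
      intro z hz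
      have h1 : ‖f z‖ = ‖f z‖ ^ (1-t) * ‖f z‖ ^ t := by
        rw [← Real.rpow_add' (norm_nonneg _) (by norm_num), sub_add_cancel, Real.rpow_one]
      calc ‖f z‖ = ‖f z‖ ^ (1-t) * ‖f z‖ ^ t := h1
        _ ≤ K ^ (1-t) * ‖f z‖ ^ t :=
            mul_le_mul_of_nonneg_right
              (Real.rpow_le_rpow (norm_nonneg _) (hKbd z hz) (by linarith))
              (Real.rpow_nonneg (norm_nonneg _) _)
    calc ∫ z in ball z₀ r, ‖f z‖
        ≤ ∫ z in ball z₀ r, K ^ (1-t) * ‖f z‖ ^ t := by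
          apply setIntegral_mono_on
          · exact (hf.continuous.norm.continuousOn.integrableOn_compact
              (isCompact_closedBall z₀ r)).mono_set ball_subset_closedBall
          · exact (hIint.mono_set hsub).const_mul _
          · exact measurableSet_ball
          · exact hb
      _ = K ^ (1-t) * ∫ z in ball z₀ r, ‖f z‖ ^ t := integral_const_mul _ _
      _ ≤ K ^ (1-t) * I := by
          apply mul_le_mul_of_nonneg_left _ (Real.rpow_nonneg hKpos.le _)
          apply setIntegral_mono_set hIint
          · filter_upwards with z using Real.rpow_nonneg (norm_nonneg _) t
          · exact HasSubset.Subset.eventuallyLE hsub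
  -- conclude M^t bound
  have hMt : π * r^2 * M ^ t ≤ 2 ^ ((2/t) * (1-t)) * I := by
    have h1 : K ^ (1-t) = 2 ^ ((2/t)*(1-t)) * M ^ (1-t) := by
      rw [hK, Real.mul_rpow (by positivity) hMpos.le,
        ← Real.rpow_mul (by norm_num : (0:ℝ) ≤ 2)]
    have hM1t : (0:ℝ) < M ^ (1-t) := Real.rpow_pos_of_pos hMpos _
    have h2 : M ^ t * M ^ (1-t) = M := by
      rw [← Real.rpow_add hMpos]; norm_num
    rw [h1] at step1
    have key : π * r^2 * M^t * M^(1-t) ≤ (2^((2/t)*(1-t)) * I) * M^(1-t) := by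
      calc π * r^2 * M^t * M^(1-t) = π * r^2 * (M^t * M^(1-t)) := mul_assoc _ _ _
        _ = π * r^2 * M := by rw [h2]
        _ ≤ 2^((2/t)*(1-t)) * M^(1-t) * I := step1
        _ = (2^((2/t)*(1-t)) * I) * M^(1-t) := by ring
    exact le_of_mul_le_mul_right key hM1t
  -- final chain
  have hfinal : ‖f w‖ ^ t ≤ d^2 * M ^ t := by
    have h1 : ‖f w‖ ^ t ≤ (ψ z₀) ^ t :=
      Real.rpow_le_rpow (norm_nonneg _) hfw ht.le
    have hψz₀ : ψ z₀ = d ^ (2/t) * M := rfl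
    have h2 : (ψ z₀) ^ t = d^2 * M ^ t := by
      rw [hψz₀, Real.mul_rpow (by positivity) hMpos.le,
        ← Real.rpow_mul hd0]
      congr 1
      rw [show 2/t*t = 2 by field_simp, Real.rpow_two]
    rw [h2] at h1; exact h1
  have hr2 : r^2 = d^2/4 := by rw [hr]; ring
  have hpi : (0:ℝ) < π := Real.pi_pos
  have hd2 : (0:ℝ) < d^2 := by positivity
  calc ‖f w‖ ^ t ≤ d^2 * M ^ t := hfinal
    _ ≤ d^2 * (2 ^ ((2/t)*(1-t)) * I / (π * r^2)) := by
        apply mul_le_mul_of_nonneg_left _ (by positivity)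
        rw [le_div_iff₀ (by positivity)]
        calc M ^ t * (π * r^2) = π * r^2 * M ^ t := by ring
          _ ≤ 2 ^ ((2/t)*(1-t)) * I := hMt
    _ = 4 * 2 ^ ((2/t)*(1-t)) / π * I := by rw [hr2]; field_simp
    _ ≤ 2 ^ (2/t + 2) / π * I := by
        apply mul_le_mul_of_nonneg_right _ hI0
        gcongr 
        calc (4:ℝ) * 2 ^ ((2/t)*(1-t)) ≤ 4 * 2 ^ (2/t) := by
              apply mul_le_mul_of_nonneg_left _ (by norm_num)
              apply Real.rpow_le_rpow_of_exponent_le one_le_two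
              nlinarith [h2t.le, ht.le]
          _ = 2 ^ (2/t + 2) := by
              rw [Real.rpow_add two_pos]
              rw [show ((2:ℝ) ^ (2:ℝ) = 4) by norm_num [Real.rpow_two]]
              ring

lemma linear_growth (f : ℂ → ℂ) (hf : Differentiable ℂ f) (K : ℝ)
    (hK : ∀ z, ‖f z‖ ≤ K * (1 + ‖z‖)) : ∃ a b : ℂ, ∀ z, f z = a * z + b := by
  have hK0 : 0 ≤ K := le_trans (norm_nonneg (f 0)) (by simpa using hK 0)
  set h := dslope f 0 with hh
  have hdiff : Differentiable ℂ h := by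
    intro z
    rcases eq_or_ne z 0 with rfl | hz
    · obtain ⟨p, hp⟩ := hf.analyticAt 0
      exact hp.has_fpower_series_dslope_fslope.analyticAt.differentiableAt
    · exact (differentiableAt_dslope_of_ne hz).mpr (hf z)
  obtain ⟨B₁, hB₁⟩ := (isCompact_closedBall (0:ℂ) 1).exists_bound_of_continuousOn
    hdiff.continuous.continuousOn
  have hb : Bornology.IsBounded (Set.range h) := by
    rw [isBounded_iff_forall_norm_le]
    refine ⟨max B₁ (2*K + ‖f 0‖), ?_⟩
    rintro _ ⟨z, rfl⟩
    rcases le_or_gt ‖z‖ 1 with hz1 | hz1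
    · exact le_max_of_le_left (hB₁ z (by simpa [mem_closedBall, dist_eq_norm] using hz1))
    · have hz0 : z ≠ 0 := by intro h0; rw [h0] at hz1; simp at hz1; linarith
      have : h z = (f z - f 0) / (z - 0) := by
        rw [hh, dslope_of_ne f hz0, slope_def_field]
      rw [this]
      refine le_max_of_le_right ?_
      rw [sub_zero, norm_div]
      have hzpos : (0:ℝ) < ‖z‖ := by linarith
      rw [div_le_iff₀ hzpos]
      calc ‖f z - f 0‖ ≤ ‖f z‖ + ‖f 0‖ := norm_sub_le _ _
        _ ≤ K * (1 + ‖z‖) + ‖f 0‖ := by linarith [hK z]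
        _ ≤ (2*K + ‖f 0‖) * ‖z‖ := by
            nlinarith [mul_nonneg hK0 (sub_nonneg.mpr hz1.le),
              mul_nonneg (norm_nonneg (f 0)) (sub_nonneg.mpr hz1.le)]
  have hconst : ∀ z, h z = h 0 := fun z => hdiff.apply_eq_apply_of_bounded hb z 0
  refine ⟨h 0, f 0, fun z => ?_⟩
  rcases eq_or_ne z 0 with rfl | hz
  · simp
  · have h1 : h z = (f z - f 0) / (z - 0) := by rw [hh, dslope_of_ne f hz, slope_def_field]
    have h2 := hconst z
    rw [h1, sub_zero] at h2
    field_simp at h2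
    rw [mul_comm] at h2
    linear_combination h2

set_option maxHeartbeats 2000000 in
/-- If g is entire and
sup_{w∈ℂ} ∫_{D(w,1)} |g'(z)|^q (1+|z|)^q / (1+|z|+||z|²+|z|−m|)^q dA(z) < ∞,
then g is a polynomial of degree at most 2. -/
theorem stmt10 (q m : ℝ) (hq : 0 < q) (hm : 0 ≤ m) (g : ℂ → ℂ) (hg : Differentiable ℂ g)
    (hbound : ∃ C : ℝ, ∀ w : ℂ,
      (∫ z in Metric.ball w 1,
          ‖deriv g z‖ ^ q * (1 + ‖z‖) ^ q /
            (1 + ‖z‖ + |‖z‖ ^ 2 + ‖z‖ - m|) ^ q) ≤ C) :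
    ∃ a b c : ℂ, ∀ z : ℂ, g z = a * z ^ 2 + b * z + c := by
  obtain ⟨C, hC⟩ := hbound
  have hg' : Differentiable ℂ (deriv g) := by
    have h1 : AnalyticOnNhd ℂ g Set.univ := Complex.analyticOnNhd_univ_iff_differentiable.mpr hg
    exact Complex.analyticOnNhd_univ_iff_differentiable.mp h1.deriv
  set N : ℂ → ℝ := fun z => 1 + ‖z‖ + |‖z‖ ^ 2 + ‖z‖ - m|
    with hNdef
  set A : ℂ → ℝ := fun z => 1 + ‖z‖ with hAdef
  have hN1 : ∀ z, 1 ≤ N z := by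
    intro z
    have h1 := norm_nonneg z
    have h2 := abs_nonneg (‖z‖ ^ 2 + ‖z‖ - m)
    simp only [hNdef]; linarith
  have hA1 : ∀ z, 1 ≤ A z := by
    intro z
    have h1 := norm_nonneg z
    simp only [hAdef]; linarith
  have hNpos : ∀ z, 0 < N z := fun z => lt_of_lt_of_le one_pos (hN1 z)
  have hApos : ∀ z, 0 < A z := fun z => lt_of_lt_of_le one_pos (hA1 z)
  -- comparability
  have hcomp : ∀ w z, z ∈ ball w 1 → N z / A z ≤ 8 * (N w / A w) := by
    intro w z hz
    have hdist : ‖z - w‖ < 1 := by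
      simpa [mem_ball, Complex.dist_eq] using hz
    have hab : |‖z‖ - ‖w‖| < 1 :=
      lt_of_le_of_lt (abs_norm_sub_norm_le z w) hdist
    have ha : 0 ≤ ‖z‖ := norm_nonneg z
    have hb : 0 ≤ ‖w‖ := norm_nonneg w
    obtain ⟨hab1, hab2⟩ := abs_lt.mp hab
    have h2 : |‖z‖ ^ 2 + ‖z‖ - m|
        ≤ |‖w‖ ^ 2 + ‖w‖ - m| + 2*(1 + ‖w‖) := by
      have he : ‖z‖ ^ 2 + ‖z‖ - m
          = (‖w‖ ^ 2 + ‖w‖ - m)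
            + (‖z‖ - ‖w‖) * (‖z‖ + ‖w‖ + 1) := by
        ring
      rw [he]
      refine (abs_add_le _ _).trans ?_
      have h3 : |(‖z‖ - ‖w‖) * (‖z‖ + ‖w‖ + 1)|
          ≤ 1 * (2*(1 + ‖w‖)) := by
        rw [abs_mul]
        apply mul_le_mul (le_of_lt hab) _ (abs_nonneg _) zero_le_one
        rw [abs_of_nonneg (by linarith)]
        linarith
      linarith
    have hNz : N z ≤ 4 * N w := by
      have e1 : N z = 1 + ‖z‖ + |‖z‖ ^ 2 + ‖z‖ - m| := rfl
      have e2 : N w = 1 + ‖w‖ + |‖w‖ ^ 2 + ‖w‖ - m| := rfl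
      rw [e1, e2]; linarith [abs_nonneg (‖w‖ ^ 2 + ‖w‖ - m)]
    have hAw : A w ≤ 2 * A z := by
      have e1 : A z = 1 + ‖z‖ := rfl
      have e2 : A w = 1 + ‖w‖ := rfl
      rw [e1, e2]; linarith
    calc N z / A z ≤ 4 * N w / A z := (div_le_div_iff_of_pos_right (hApos z)).mpr hNz
      _ ≤ 8 * (N w / A w) := by
          rw [← mul_div_assoc, div_le_div_iff₀ (hApos z) (hApos w)]
          nlinarith [mul_nonneg (by linarith [hN1 w] : (0:ℝ) ≤ N w)
            (by linarith : (0:ℝ) ≤ 2*A z - A w)]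
  -- continuity facts
  have habsq : Continuous fun z => ‖deriv g z‖ ^ q := by
    have := cont_norm_rpow (deriv g) hg' hq
    simpa using this
  have hrpowA : Continuous fun z => A z ^ q := by
    rw [continuous_iff_continuousAt]
    intro z
    exact (Real.continuousAt_rpow_const _ _ (Or.inr hq.le)).comp
      (continuous_const.add continuous_norm).continuousAt
  have hrpowN : Continuous fun z => N z ^ q := by
    rw [continuous_iff_continuousAt]
    intro z
    refine (Real.continuousAt_rpow_const _ _ (Or.inr hq.le)).comp ?_
    exact ((continuous_const.add continuous_norm).add
      (((continuous_norm.pow 2).add continuous_norm).sub continuous_const).abs).continuousAt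
  have hcontI : Continuous fun z => ‖deriv g z‖ ^ q * A z ^ q / N z ^ q :=
    (habsq.mul hrpowA).div hrpowN
      (fun z => (Real.rpow_pos_of_pos (hNpos z) q).ne')
  have hC0 : 0 ≤ C := by
    refine le_trans ?_ (hC 0)
    apply setIntegral_nonneg measurableSet_ball
    intro z _
    have := hNpos z
    have := hApos z
    positivity
  -- Step A : integral bound for |g'|^q
  have hStepA : ∀ w, ∫ z in ball w 1, ‖deriv g z‖ ^ q
      ≤ C * (8 * (N w / A w)) ^ q := by
    intro w
    have hpt : ∀ z ∈ ball w 1, ‖deriv g z‖ ^ q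
        ≤ (‖deriv g z‖ ^ q * A z ^ q / N z ^ q) * (8 * (N w / A w)) ^ q := by
      intro z hz
      have h1 : ‖deriv g z‖ ^ q
          = (‖deriv g z‖ ^ q * A z ^ q / N z ^ q) * (N z / A z) ^ q := by
        rw [Real.div_rpow (hNpos z).le (hApos z).le]
        have h2 : (0:ℝ) < A z ^ q := Real.rpow_pos_of_pos (hApos z) q
        have h3 : (0:ℝ) < N z ^ q := Real.rpow_pos_of_pos (hNpos z) q
        field_simp
      conv_lhs => rw [h1]
      apply mul_le_mul_of_nonneg_left
      · exact Real.rpow_le_rpow (by positivity) (hcomp w z hz) hq.le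
      · positivity
    calc ∫ z in ball w 1, ‖deriv g z‖ ^ q
        ≤ ∫ z in ball w 1,
            (‖deriv g z‖ ^ q * A z ^ q / N z ^ q) * (8 * (N w / A w)) ^ q := by
          apply setIntegral_mono_on
          · exact (habsq.continuousOn.integrableOn_compact
              (isCompact_closedBall w 1)).mono_set ball_subset_closedBall
          · exact ((hcontI.mul continuous_const).continuousOn.integrableOn_compact
              (isCompact_closedBall w 1)).mono_set ball_subset_closedBall
          · exact measurableSet_ball
          · exact hpt
      _ = (∫ z in ball w 1, ‖deriv g z‖ ^ q * A z ^ q / N z ^ q)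
            * (8 * (N w / A w)) ^ q := integral_mul_const _ _
      _ ≤ C * (8 * (N w / A w)) ^ q := by
          apply mul_le_mul_of_nonneg_right (hC w) (by positivity)
  -- Step B : pointwise bound on deriv g
  set V := (volume (ball (0:ℂ) 1)).toReal with hVdef
  have hV0 : 0 ≤ V := ENNReal.toReal_nonneg
  set t := min q 1 with htdef
  have ht : 0 < t := lt_min hq one_pos
  have ht1 : t ≤ 1 := min_le_right _ _
  have htq : t ≤ q := min_le_left _ _
  set D := (2:ℝ) ^ (2/t + 2) / π * (V + 1) with hDdef
  have hD0 : 0 ≤ D := by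
    have := Real.pi_pos
    positivity
  have hStepB : ∀ w : ℂ, ‖deriv g w‖
      ≤ (D ^ (1/t) * ((C+1) ^ (1/q) * 8 * (1+m))) * (1 + ‖w‖) := by
    intro w
    set Ww := N w / A w with hWwdef
    have hWw : 0 < Ww := div_pos (hNpos w) (hApos w)
    set B := (C+1) * (8 * Ww) ^ q with hBdef
    have hBpos : 0 < B := by positivity
    set lam := B ^ (1/q) with hlamdef
    have hlampos : 0 < lam := Real.rpow_pos_of_pos hBpos _
    have hlamq : lam ^ q = B := by
      rw [hlamdef, ← Real.rpow_mul hBpos.le, one_div, inv_mul_cancel₀ hq.ne', Real.rpow_one]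
    set f : ℂ → ℂ := fun z => deriv g z / (lam:ℂ) with hfdef
    have hfd : Differentiable ℂ f := hg'.div_const _
    have hnorm : ∀ z, ‖f z‖ = ‖deriv g z‖ / lam := by
      intro z
      rw [hfdef]
      simp only [norm_div, Complex.norm_real, Real.norm_eq_abs, abs_of_pos hlampos]
    have hIt : ∫ z in ball w 1, ‖f z‖ ^ t ≤ V + 1 := by
      have hpt : ∀ z ∈ ball w 1, ‖f z‖ ^ t
          ≤ 1 + ‖deriv g z‖ ^ q / lam ^ q := by
        intro z _
        rw [hnorm]
        have hdivq : (‖deriv g z‖ / lam) ^ q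
            = ‖deriv g z‖ ^ q / lam ^ q :=
          Real.div_rpow (norm_nonneg _) hlampos.le q
        have hq0 : (0:ℝ) ≤ ‖deriv g z‖ ^ q / lam ^ q := by positivity
        rcases le_or_gt (‖deriv g z‖ / lam) 1 with h | h
        · have h1 : (‖deriv g z‖ / lam) ^ t ≤ 1 :=
            Real.rpow_le_one (by positivity) h ht.le
          linarith
        · have h1 : (‖deriv g z‖ / lam) ^ t
              ≤ (‖deriv g z‖ / lam) ^ q :=
            Real.rpow_le_rpow_of_exponent_le h.le htq
          rw [hdivq] at h1
          linarith
      have hint1 : IntegrableOn (fun z => ‖f z‖ ^ t) (ball w 1) :=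
        ((cont_norm_rpow f hfd ht).continuousOn.integrableOn_compact
          (isCompact_closedBall w 1)).mono_set ball_subset_closedBall
      have hint2 : IntegrableOn
          (fun z => 1 + ‖deriv g z‖ ^ q / lam ^ q) (ball w 1) := by
        exact (integrableOn_const measure_ball_lt_top.ne).add
          (((habsq.div_const _).continuousOn.integrableOn_compact
            (isCompact_closedBall w 1)).mono_set ball_subset_closedBall)
      calc ∫ z in ball w 1, ‖f z‖ ^ t
          ≤ ∫ z in ball w 1, (1 + ‖deriv g z‖ ^ q / lam ^ q) :=
            setIntegral_mono_on hint1 hint2 measurableSet_ball hpt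
        _ = (volume (ball w 1)).toReal
              + (∫ z in ball w 1, ‖deriv g z‖ ^ q) / lam ^ q := by
            rw [integral_add (integrableOn_const measure_ball_lt_top.ne).integrable
              ((((habsq.div_const _).continuousOn.integrableOn_compact
                (isCompact_closedBall w 1)).mono_set ball_subset_closedBall)).integrable]
            simp only [MeasureTheory.integral_const, MeasureTheory.Measure.restrict_apply,
              MeasurableSet.univ, univ_inter, smul_eq_mul, mul_one]
            rw [MeasureTheory.integral_div]
            simp [Measure.real]
        _ ≤ V + 1 := by
            have hvol : (volume (ball w 1)).toReal = V := by
              rw [hVdef, Measure.addHaar_ball_center]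
            rw [hvol]
            have h2 : (∫ z in ball w 1, ‖deriv g z‖ ^ q) / lam ^ q ≤ 1 := by
              rw [hlamq, hBdef, div_le_one (by positivity)]
              refine (hStepA w).trans ?_
              rw [← hWwdef]
              nlinarith [Real.rpow_pos_of_pos (by positivity : (0:ℝ) < 8 * Ww) q]
            linarith
    have hsm := submean_pow f hfd w ht ht1
    have hDb : ‖f w‖ ^ t ≤ D := by
      refine hsm.trans ?_
      rw [hDdef]
      apply mul_le_mul_of_nonneg_left _ (by positivity)
      linarith
    have hfwle : ‖f w‖ ≤ D ^ (1/t) := by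
      have h0 : 0 ≤ ‖f w‖ := norm_nonneg _
      calc ‖f w‖ = (‖f w‖ ^ t) ^ (1/t) := by
            rw [← Real.rpow_mul h0, mul_one_div, div_self ht.ne', Real.rpow_one]
        _ ≤ D ^ (1/t) := Real.rpow_le_rpow (Real.rpow_nonneg h0 t) hDb (by positivity)
    have hlamval : lam = (C+1) ^ (1/q) * (8 * Ww) := by
      rw [hlamdef, hBdef, Real.mul_rpow (by positivity) (by positivity),
        ← Real.rpow_mul (by positivity), mul_one_div, div_self hq.ne', Real.rpow_one]
    have hWwle : Ww ≤ (1+m) * (1 + ‖w‖) := by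
      set b := ‖w‖ with hbdef
      have hb : 0 ≤ b := norm_nonneg w
      have h1 : |b^2 + b - m| ≤ b^2 + b + m := by
        rw [abs_le]
        constructor <;> nlinarith
      have h2 : N w ≤ (1+m) * (1+b) * A w := by
        simp only [hNdef, hAdef, ← hbdef]
        nlinarith
      rw [hWwdef, div_le_iff₀ (hApos w)]
      calc N w ≤ (1+m) * (1+b) * A w := h2
        _ = (1+m) * (1 + ‖w‖) * A w := by rw [hbdef]
    have heq : ‖deriv g w‖ = ‖f w‖ * lam := by
      rw [hnorm w]
      field_simp
    calc ‖deriv g w‖ = ‖f w‖ * lam := heq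
      _ ≤ D ^ (1/t) * lam := mul_le_mul_of_nonneg_right hfwle hlampos.le
      _ = D ^ (1/t) * ((C+1) ^ (1/q) * 8 * Ww) := by rw [hlamval]; ring
      _ ≤ D ^ (1/t) * ((C+1) ^ (1/q) * 8 * ((1+m) * (1 + ‖w‖))) := by
          apply mul_le_mul_of_nonneg_left _ (by positivity)
          apply mul_le_mul_of_nonneg_left hWwle (by positivity)
      _ = (D ^ (1/t) * ((C+1) ^ (1/q) * 8 * (1+m))) * (1 + ‖w‖) := by ring
  -- Step C : conclude
  obtain ⟨a, b, hab⟩ := linear_growth (deriv g) hg' _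
    (fun z => by simpa using hStepB z)
  refine ⟨a/2, b, g 0, fun z => ?_⟩
  have hGd : ∀ z : ℂ, HasDerivAt (fun z : ℂ => a/2*z^2 + b*z + g 0) (a*z + b) z := by
    intro z
    have h1 : HasDerivAt (fun z : ℂ => z^2) (2*z) z := by simpa using hasDerivAt_pow 2 z
    have h2 := ((h1.const_mul (a/2)).add ((hasDerivAt_id z).const_mul b)).add_const (g 0)
    exact h2.congr_deriv (by ring)
  have hdiff2 : Differentiable ℂ (fun z => g z - (a/2*z^2 + b*z + g 0)) :=
    hg.sub (fun z => (hGd z).differentiableAt)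
  have hzero : ∀ z, deriv (fun z => g z - (a/2*z^2 + b*z + g 0)) z = 0 := by
    intro z
    rw [deriv_fun_sub (hg z) (hGd z).differentiableAt, (hGd z).deriv, hab z]
    ring
  have hcc := is_const_of_deriv_eq_zero hdiff2 hzero z 0
  have : g z - (a/2*z^2 + b*z + g 0) = g 0 - (a/2*0^2 + b*0 + g 0) := hcc
  rw [show a/2*(0:ℂ)^2 + b*0 + g 0 = g 0 by ring] at this
  linear_combination this
end
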